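/- Let n ≥ 2. The monoid presented by generators e_{i,j} for i < j in [±n], subject to the relations (SP1) e_{i,j}·e_{i,j} = e_{i,j}; (SP2) e_{i,j}·e_{r,s} = e_{r,s}·e_{i,j} for all i < j and r < s; (SP3) e_{i,j}·e_{j,k} = e_{i,j}·e_{i,k} = e_{i,k}·e_{j,k} for all i < j < k in [±n]; (SP4) e_{i,j} = e_{−j,−i} for all i < j, is isomorphic as a monoid to the monoid SP_n of signed partitions of [±n], via an isomorphism sending the generator e_{i,j} to ε_{i,j}. -/

import Mathlib

instance setoidCommMonoid (α : Type*) : CommMonoid (Setoid α) where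
  mul := (· ⊔ ·)
  one := ⊥
  mul_assoc := sup_assoc
  one_mul := bot_sup_eq
  mul_one := sup_bot_eq
  mul_comm := sup_comm

def muSet {α : Type*} (X : Set α) : Setoid α :=
  Relation.EqvGen.setoid (fun x y => x ∈ X ∧ y ∈ X)

def mu {α : Type*} (i j : α) : Setoid α := muSet {i, j}

/-- `[±n]`: nonzero integers of absolute value at most `n`, with the order from `ℤ`. -/
abbrev PM (n : ℕ) := {k : ℤ // k ≠ 0 ∧ |k| ≤ (n : ℤ)}

namespace PM

/-- The negation involution `k ↦ -k` on `[±n]`. -/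
def neg {n : ℕ} (x : PM n) : PM n :=
  ⟨-x.1, by obtain ⟨h1, h2⟩ := x.2; exact ⟨neg_ne_zero.mpr h1, by rwa [abs_neg]⟩⟩

@[simp] theorem neg_neg {n : ℕ} (x : PM n) : x.neg.neg = x := Subtype.ext (by simp [neg])

theorem neg_lt_neg {n : ℕ} {x y : PM n} (h : x < y) : y.neg < x.neg := by
  have h' : x.1 < y.1 := Subtype.coe_lt_coe.mpr h
  rw [← Subtype.coe_lt_coe]
  show -y.1 < -x.1
  omega

theorem neg_lt_pos {n : ℕ} {x y : PM n} (hx : 0 < x.1) (hy : 0 < y.1) : x.neg < y := by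
  rw [← Subtype.coe_lt_coe]
  show -x.1 < y.1
  omega

theorem pos_ne_neg {n : ℕ} {x y : PM n} (hx : 0 < x.1) (hy : 0 < y.1) : y ≠ x.neg := by
  intro h
  have : y.1 = -x.1 := congrArg Subtype.val h
  omega

theorem neg_lt_self {n : ℕ} {x : PM n} (hx : 0 < x.1) : x.neg < x := neg_lt_pos hx hx

/-- The absolute value map `x ↦ |x|` from `[±n]` to its positive part. -/
def abs {n : ℕ} (x : PM n) : PM n :=
  ⟨|x.1|, by obtain ⟨h1, h2⟩ := x.2; exact ⟨abs_ne_zero.mpr h1, by rwa [abs_abs]⟩⟩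

end PM

/-- Image of a subset of `[±n]` under negation. -/
def negSet {n : ℕ} (K : Set (PM n)) : Set (PM n) := PM.neg '' K

/-- The partition `I⁻` transported along negation: `x ∼ y` in `negPart I` iff `-x ∼ -y` in `I`. -/
def negPart {n : ℕ} (I : Setoid (PM n)) : Setoid (PM n) := Setoid.comap PM.neg I

/-- A set partition `I` of `[±n]` is *signed* if for every block `K` of `I` the set `-K` is
also a block; equivalently, `x ∼ y ↔ -x ∼ -y` for all `x, y`. -/
def IsSigned {n : ℕ} (I : Setoid (PM n)) : Prop :=
  ∀ x y : PM n, I x y ↔ I (PM.neg x) (PM.neg y)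

/-- A *zero block* of a partition `I` is a block `K` with `-K = K`. -/
def IsZeroBlock {n : ℕ} (I : Setoid (PM n)) (K : Set (PM n)) : Prop :=
  K ∈ I.classes ∧ negSet K = K

/-- A `Bₙ`-partition: a signed partition of `[±n]` with at most one zero block. -/
def IsBPart {n : ℕ} (I : Setoid (PM n)) : Prop :=
  IsSigned I ∧ Set.Subsingleton {K | IsZeroBlock I K}

/-- A *restricted* signed partition: all its zero blocks have more than two elements. -/
def IsRestricted {n : ℕ} (I : Setoid (PM n)) : Prop :=
  IsSigned I ∧ ∀ K : Set (PM n), IsZeroBlock I K → 2 < K.ncard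

/-- A `Dₙ`-partition: a `Bₙ`-partition whose zero block (if present) has more than two
elements. -/
def IsDPart {n : ℕ} (I : Setoid (PM n)) : Prop :=
  IsBPart I ∧ ∀ K : Set (PM n), IsZeroBlock I K → 2 < K.ncard

/-- For `i < j` in `[±n]`, the signed partition `ε_{i,j} = μ_{-j,-i} ⊔ μ_{i,j}`. -/
def eps {n : ℕ} (i j : PM n) : Setoid (PM n) := mu (PM.neg j) (PM.neg i) ⊔ mu i j

/-- Generators `e_{i,j}` for `i < j` in `[±n]`. -/
abbrev SGen (n : ℕ) := {p : PM n × PM n // p.1 < p.2}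

open FreeMonoid in
/-- The defining relations (SP1)–(SP4) of the monoid of signed partitions. -/
inductive SRel (n : ℕ) : FreeMonoid (SGen n) → FreeMonoid (SGen n) → Prop
  /-- (SP1) `e_{i,j} e_{i,j} = e_{i,j}`. -/
  | SP1 (a : SGen n) : SRel n (of a * of a) (of a)
  /-- (SP2) `e_{i,j} e_{r,s} = e_{r,s} e_{i,j}`. -/
  | SP2 (a b : SGen n) : SRel n (of a * of b) (of b * of a)
  /-- (SP3), first equality: `e_{i,j} e_{j,k} = e_{i,j} e_{i,k}` for `i < j < k`. -/
  | SP3a (i j k : PM n) (hij : i < j) (hjk : j < k) :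
      SRel n (of ⟨(i, j), hij⟩ * of ⟨(j, k), hjk⟩)
        (of ⟨(i, j), hij⟩ * of ⟨(i, k), hij.trans hjk⟩)
  /-- (SP3), second equality: `e_{i,j} e_{j,k} = e_{i,k} e_{j,k}` for `i < j < k`. -/
  | SP3b (i j k : PM n) (hij : i < j) (hjk : j < k) :
      SRel n (of ⟨(i, j), hij⟩ * of ⟨(j, k), hjk⟩)
        (of ⟨(i, k), hij.trans hjk⟩ * of ⟨(j, k), hjk⟩)
  /-- (SP4) `e_{i,j} = e_{-j,-i}`. -/
  | SP4 (i j : PM n) (hij : i < j) :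
      SRel n (of ⟨(i, j), hij⟩) (of ⟨(PM.neg j, PM.neg i), PM.neg_lt_neg hij⟩)

/-! The map `φ : e_{i,j} ↦ ε_{i,j}` (`SRel.epsHom`) respects the relations because
`ε_{i,k} ≤ ε_{i,j} ⊔ ε_{j,k}`, and its image consists of signed partitions since joins of
signed partitions are signed. For the converse, send a signed partition `I` to the product
`ψ I` (`SRel.genProd I`) of all generators `e_{i,j}` with `ε_{i,j} ≤ I`; then `φ (ψ I) = I`.
Injectivity comes from `ψ (φ m) = m`: the presented monoid is commutative and idempotent,
every generator of `m` lies below `ψ (φ m)`, and conversely the pairs `{i, j}` whose generator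
is absorbed by `m` form a partition containing `φ m`, its transitivity being exactly (SP3). -/

section Setoid

variable {α : Type*}

theorem setoid_mul_eq_sup (I J : Setoid α) : I * J = I ⊔ J := rfl

theorem setoid_prod_eq_sup {ι : Type*} (s : Finset ι) (f : ι → Setoid α) :
    ∏ i ∈ s, f i = s.sup f := by
  classical
  induction s using Finset.induction_on with
  | empty => rfl
  | insert i s hi ih => rw [Finset.prod_insert hi, Finset.sup_insert, setoid_mul_eq_sup, ih]

theorem mu_le_iff {i j : α} {I : Setoid α} : mu i j ≤ I ↔ I i j := by
  refine ⟨fun h => Setoid.le_def.1 h (Relation.EqvGen.rel _ _ ⟨.inl rfl, .inr rfl⟩),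
    fun h => Setoid.eqvGen_le ?_⟩
  rintro x y ⟨rfl | rfl, rfl | rfl⟩
  exacts [I.refl _, h, I.symm h, I.refl _]

theorem mu_comm (i j : α) : mu i j = mu j i := by
  rw [mu, mu, Set.pair_comm]

end Setoid

section Eps

variable {n : ℕ} {i j k : PM n}

theorem eps_le_iff {I : Setoid (PM n)} : eps i j ≤ I ↔ I j.neg i.neg ∧ I i j := by
  rw [eps, sup_le_iff, mu_le_iff, mu_le_iff]

theorem eps_rel (i j : PM n) : eps i j i j := (eps_le_iff.1 le_rfl).2

theorem eps_rel_neg (i j : PM n) : eps i j j.neg i.neg := (eps_le_iff.1 le_rfl).1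

theorem eps_comm (i j : PM n) : eps i j = eps j i := by
  rw [eps, eps, mu_comm i, mu_comm j.neg]

theorem eps_neg (i j : PM n) : eps j.neg i.neg = eps i j := by
  rw [eps, eps, PM.neg_neg, PM.neg_neg, sup_comm]

theorem eps_le_sup (i j k : PM n) : eps i k ≤ eps i j ⊔ eps j k := by
  set S := eps i j ⊔ eps j k
  obtain ⟨hji, hij⟩ := eps_le_iff.1 (le_sup_left : eps i j ≤ S)
  obtain ⟨hkj, hjk⟩ := eps_le_iff.1 (le_sup_right : eps j k ≤ S)
  exact eps_le_iff.2 ⟨S.trans' hkj hji, S.trans' hij hjk⟩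

theorem eps_sup_eps_eq_left : eps i j ⊔ eps j k = eps i j ⊔ eps i k :=
  le_antisymm (sup_le le_sup_left (eps_comm i j ▸ eps_le_sup j i k))
    (sup_le le_sup_left (eps_le_sup i j k))

theorem eps_sup_eps_eq_right : eps i j ⊔ eps j k = eps i k ⊔ eps j k :=
  le_antisymm (sup_le (eps_comm j k ▸ eps_le_sup i k j) le_sup_right)
    (sup_le (eps_le_sup i j k) le_sup_right)

end Eps

section Signed

variable {n : ℕ} {I J : Setoid (PM n)}

theorem isSigned_iff_le_comap : IsSigned I ↔ I ≤ I.comap PM.neg := by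
  refine ⟨fun hI => Setoid.le_def.2 fun h => (hI _ _).1 h,
    fun hI x y => ⟨fun h => ?_, fun h => ?_⟩⟩
  · exact Setoid.le_def.1 hI h
  · simpa [Setoid.comap_rel] using Setoid.le_def.1 hI h

theorem isSigned_bot : IsSigned (⊥ : Setoid (PM n)) :=
  isSigned_iff_le_comap.2 bot_le

theorem IsSigned.sup (hI : IsSigned I) (hJ : IsSigned J) : IsSigned (I ⊔ J) := by
  have comap_mono : ∀ {K L : Setoid (PM n)}, K ≤ L → K.comap PM.neg ≤ L.comap PM.neg :=
    fun hKL => Setoid.le_def.2 fun h => Setoid.le_def.1 hKL h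
  rw [isSigned_iff_le_comap] at *
  exact sup_le (hI.trans (comap_mono le_sup_left)) (hJ.trans (comap_mono le_sup_right))

theorem isSigned_eps (i j : PM n) : IsSigned (eps i j) := by
  refine isSigned_iff_le_comap.2 (eps_le_iff.2 ⟨?_, ?_⟩) <;> rw [Setoid.comap_rel]
  · simpa using (eps i j).symm (eps_rel i j)
  · exact (eps i j).symm (eps_rel_neg i j)

end Signed

theorem mul_eq_self_of_mul_eq_mul {M : Type*} [Monoid M] {m a b c : M}
    (hc : IsIdempotentElem c) (habc : a * b = a * c) (ha : m * a = m) (hb : m * b = m) :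
    m * c = m := by
  have hab : m * (a * b) = m := by rw [← mul_assoc, ha, hb]
  calc m * c = m * (a * c) * c := by rw [← habc, hab]
    _ = m * (a * b) := by rw [mul_assoc, mul_assoc, hc.eq, habc]
    _ = m := hab

theorem Finset.prod_mul_eq_self_of_mem {ι M : Type*} [CommMonoid M] {s : Finset ι} {f : ι → M}
    {i : ι} (hi : i ∈ s) (hf : IsIdempotentElem (f i)) :
    (∏ j ∈ s, f j) * f i = ∏ j ∈ s, f j := by
  classical
  rw [← Finset.mul_prod_erase s f hi, mul_right_comm, hf.eq]

instance PM.instFinite (n : ℕ) : Finite (PM n) :=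
  ((Set.finite_Icc (-(n : ℤ)) n).subset (t := {k : ℤ | k ≠ 0 ∧ |k| ≤ (n : ℤ)})
    fun _ hk => abs_le.1 hk.2).to_subtype

namespace SRel

open PresentedMonoid

variable {n : ℕ}

theorem of_mul_self (a : SGen n) : of (SRel n) a * of (SRel n) a = of (SRel n) a :=
  mk_eq_mk_of_rel (SP1 a)

theorem of_mul_comm (a b : SGen n) :
    of (SRel n) a * of (SRel n) b = of (SRel n) b * of (SRel n) a :=
  mk_eq_mk_of_rel (SP2 a b)

theorem of_mul_of_eq_left {i j k : PM n} (hij : i < j) (hjk : j < k) :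
    of (SRel n) ⟨(i, j), hij⟩ * of (SRel n) ⟨(j, k), hjk⟩
      = of (SRel n) ⟨(i, j), hij⟩ * of (SRel n) ⟨(i, k), hij.trans hjk⟩ :=
  mk_eq_mk_of_rel (SP3a i j k hij hjk)

theorem of_mul_of_eq_right {i j k : PM n} (hij : i < j) (hjk : j < k) :
    of (SRel n) ⟨(i, j), hij⟩ * of (SRel n) ⟨(j, k), hjk⟩
      = of (SRel n) ⟨(i, k), hij.trans hjk⟩ * of (SRel n) ⟨(j, k), hjk⟩ :=
  mk_eq_mk_of_rel (SP3b i j k hij hjk)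

theorem of_neg {i j : PM n} (hij : i < j) :
    of (SRel n) ⟨(i, j), hij⟩ = of (SRel n) ⟨(j.neg, i.neg), PM.neg_lt_neg hij⟩ :=
  mk_eq_mk_of_rel (SP4 i j hij)

instance : CommMonoid (PresentedMonoid (SRel n)) :=
  { (inferInstance : Monoid (PresentedMonoid (SRel n))) with
    mul_comm := fun x y => by
      have h := Submonoid.closure_le_centralizer_centralizer (Set.range (of (SRel n)))
      rw [closure_range_of] at h
      refine Set.centralizer_centralizer_comm_of_comm ?_ x (h trivial) y (h trivial)
      rintro _ ⟨a, rfl⟩ _ ⟨b, rfl⟩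
      exact of_mul_comm a b }

theorem lift_eps_eq_of_rel (u v : FreeMonoid (SGen n)) (h : SRel n u v) :
    FreeMonoid.lift (fun a : SGen n => eps a.1.1 a.1.2) u
      = FreeMonoid.lift (fun a : SGen n => eps a.1.1 a.1.2) v := by
  cases h <;> simp only [map_mul, FreeMonoid.lift_eval_of, setoid_mul_eq_sup]
  case SP1 => exact sup_idem _
  case SP2 => exact sup_comm _ _
  case SP3a => exact eps_sup_eps_eq_left
  case SP3b => exact eps_sup_eps_eq_right
  case SP4 i j _ => exact (eps_neg i j).symm

def epsHom : PresentedMonoid (SRel n) →* Setoid (PM n) :=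
  lift (fun a : SGen n => eps a.1.1 a.1.2) lift_eps_eq_of_rel

theorem epsHom_of (a : SGen n) : epsHom (of (SRel n) a) = eps a.1.1 a.1.2 := rfl

theorem isSigned_epsHom (m : PresentedMonoid (SRel n)) : IsSigned (epsHom m) := by
  induction m using Submonoid.dense_induction _ (closure_range_of _) with
  | mem _ h => obtain ⟨a, rfl⟩ := h; exact isSigned_eps _ _
  | one => rw [map_one]; exact isSigned_bot
  | mul x y hx hy => rw [map_mul]; exact hx.sup hy

noncomputable def gensBelow (I : Setoid (PM n)) : Finset (SGen n) :=
  (Set.toFinite {a : SGen n | eps a.1.1 a.1.2 ≤ I}).toFinset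

theorem mem_gensBelow {I : Setoid (PM n)} {a : SGen n} :
    a ∈ gensBelow I ↔ eps a.1.1 a.1.2 ≤ I :=
  Set.Finite.mem_toFinset _

noncomputable def genProd (I : Setoid (PM n)) : PresentedMonoid (SRel n) :=
  ∏ a ∈ gensBelow I, of (SRel n) a

theorem epsHom_genProd {I : Setoid (PM n)} (hI : IsSigned I) : epsHom (genProd I) = I := by
  simp only [genProd, map_prod, epsHom_of, setoid_prod_eq_sup]
  refine le_antisymm (Finset.sup_le fun a ha => mem_gensBelow.1 ha) (Setoid.le_def.2 ?_)
  intro x y hxy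
  have below : ∀ {x y : PM n} (h : x < y), I x y →
      ((gensBelow I).sup fun a : SGen n => eps a.1.1 a.1.2) x y := by
    intro x y h hxy
    have ha : (⟨(x, y), h⟩ : SGen n) ∈ gensBelow I :=
      mem_gensBelow.2 (eps_le_iff.2 ⟨I.symm ((hI x y).1 hxy), hxy⟩)
    exact Setoid.le_def.1 (Finset.le_sup (f := fun a : SGen n => eps a.1.1 a.1.2) ha) (eps_rel x y)
  rcases lt_trichotomy x y with h | rfl | h
  · exact below h hxy
  · exact Setoid.refl' _ x
  · exact Setoid.symm' _ (below h (I.symm hxy))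

theorem genProd_mul_of_epsHom_le {I : Setoid (PM n)} (m : PresentedMonoid (SRel n))
    (hm : epsHom m ≤ I) : genProd I * m = genProd I := by
  induction m using Submonoid.dense_induction _ (closure_range_of _) with
  | mem _ h =>
    obtain ⟨a, rfl⟩ := h
    exact Finset.prod_mul_eq_self_of_mem (mem_gensBelow.2 hm) (of_mul_self a)
  | one => exact mul_one _
  | mul x y hx hy =>
    rw [map_mul, setoid_mul_eq_sup, sup_le_iff] at hm
    rw [← mul_assoc, hx hm.1, hy hm.2]

def Absorbs (m : PresentedMonoid (SRel n)) (x y : PM n) : Prop :=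
  ∀ a : SGen n, a.1 = (x, y) ∨ a.1 = (y, x) → m * of (SRel n) a = m

section Absorbs

variable {m : PresentedMonoid (SRel n)} {x y z : PM n}

theorem absorbs_refl (x : PM n) : Absorbs m x x := by
  rintro ⟨_, ha⟩ (rfl | rfl) <;> exact absurd ha (lt_irrefl x)

theorem Absorbs.symm (h : Absorbs m x y) : Absorbs m y x :=
  fun a ha => h a ha.symm

theorem absorbs_iff_of_lt (hxy : x < y) :
    Absorbs m x y ↔ m * of (SRel n) ⟨(x, y), hxy⟩ = m := by
  refine ⟨fun h => h _ (.inl rfl), ?_⟩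
  rintro h ⟨_, ha⟩ (rfl | rfl)
  exacts [h, absurd hxy ha.asymm]

theorem Absorbs.mul_right (h : Absorbs m x y) (m' : PresentedMonoid (SRel n)) :
    Absorbs (m * m') x y :=
  fun a ha => by rw [mul_right_comm, h a ha]

theorem Absorbs.of_lt_trans (hxy : Absorbs m x y) (hyz : Absorbs m y z) (hxz : x < z) :
    m * of (SRel n) ⟨(x, z), hxz⟩ = m := by
  rcases lt_trichotomy y x with hyx | rfl | hxy'
  · exact mul_eq_self_of_mul_eq_mul (of_mul_self _) (of_mul_of_eq_left hyx hxz).symm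
      ((absorbs_iff_of_lt hyx).1 hxy.symm) ((absorbs_iff_of_lt (hyx.trans hxz)).1 hyz)
  · exact (absorbs_iff_of_lt hxz).1 hyz
  · rcases lt_trichotomy y z with hyz' | rfl | hzy
    · exact mul_eq_self_of_mul_eq_mul (of_mul_self _) (of_mul_of_eq_left hxy' hyz')
        ((absorbs_iff_of_lt hxy').1 hxy) ((absorbs_iff_of_lt hyz').1 hyz)
    · exact (absorbs_iff_of_lt hxz).1 hxy
    · refine mul_eq_self_of_mul_eq_mul (of_mul_self _) ?_
        ((absorbs_iff_of_lt hzy).1 hyz.symm) ((absorbs_iff_of_lt hxy').1 hxy)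
      rw [mul_comm, ← of_mul_of_eq_right hxz hzy, mul_comm]

theorem Absorbs.trans (hxy : Absorbs m x y) (hyz : Absorbs m y z) : Absorbs m x z := by
  rcases lt_trichotomy x z with hxz | rfl | hzx
  · exact (absorbs_iff_of_lt hxz).2 (hxy.of_lt_trans hyz hxz)
  · exact absorbs_refl x
  · exact ((absorbs_iff_of_lt hzx).2 (hyz.symm.of_lt_trans hxy.symm hzx)).symm

end Absorbs

def absorbsSetoid (m : PresentedMonoid (SRel n)) : Setoid (PM n) where
  r := Absorbs m
  iseqv := ⟨absorbs_refl, Absorbs.symm, Absorbs.trans⟩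

theorem epsHom_le_absorbsSetoid (m : PresentedMonoid (SRel n)) :
    epsHom m ≤ absorbsSetoid m := by
  have mono : ∀ x y : PresentedMonoid (SRel n), absorbsSetoid x ≤ absorbsSetoid (x * y) :=
    fun x y => Setoid.le_def.2 fun h => Absorbs.mul_right h y
  induction m using Submonoid.dense_induction _ (closure_range_of _) with
  | mem _ h =>
    obtain ⟨⟨⟨i, j⟩, hij⟩, rfl⟩ := h
    refine eps_le_iff.2 ⟨(absorbs_iff_of_lt (PM.neg_lt_neg hij)).2 ?_,
      (absorbs_iff_of_lt hij).2 (of_mul_self _)⟩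
    rw [← of_neg hij, of_mul_self]
  | one => rw [map_one]; exact bot_le
  | mul x y hx hy =>
    rw [map_mul, setoid_mul_eq_sup]
    exact sup_le (hx.trans (mono x y)) (hy.trans (mul_comm y x ▸ mono y x))

theorem mul_genProd_epsHom (m : PresentedMonoid (SRel n)) : m * genProd (epsHom m) = m := by
  refine Finset.prod_induction _ (fun c => m * c = m) (fun b c hb hc => ?_) (mul_one m) ?_
  · rw [← mul_assoc, hb, hc]
  · intro a ha
    have h := Setoid.le_def.1 ((mem_gensBelow.1 ha).trans (epsHom_le_absorbsSetoid m)) (eps_rel _ _)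
    exact h a (.inl rfl)

theorem genProd_epsHom (m : PresentedMonoid (SRel n)) : genProd (epsHom m) = m :=
  calc genProd (epsHom m) = genProd (epsHom m) * m := (genProd_mul_of_epsHom_le m le_rfl).symm
    _ = m * genProd (epsHom m) := mul_comm _ _
    _ = m := mul_genProd_epsHom m

theorem epsHom_injective : Function.Injective (epsHom (n := n)) :=
  Function.LeftInverse.injective genProd_epsHom

theorem range_epsHom : Set.range (epsHom (n := n)) = {I | IsSigned I} :=
  Set.Subset.antisymm (Set.range_subset_iff.2 isSigned_epsHom)
    fun _ hI => ⟨genProd _, epsHom_genProd hI⟩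

end SRel

theorem presentedMonoid_isomorphic_SPn_general (n : ℕ) :
    ∃ φ : PresentedMonoid (SRel n) →* Setoid (PM n),
      Function.Injective φ ∧
      Set.range φ = {I | IsSigned I} ∧
      ∀ a : SGen n, φ (PresentedMonoid.of (SRel n) a) = eps a.1.1 a.1.2 :=
  ⟨SRel.epsHom, SRel.epsHom_injective, SRel.range_epsHom, SRel.epsHom_of⟩

/-- The monoid presented by the generators `e_{i,j}` (for `i < j` in
`[±n]`) subject to relations (SP1)–(SP4) is isomorphic to the monoid `SPₙ` of signed
partitions of `[±n]`, via an isomorphism sending `e_{i,j}` to `ε_{i,j}`: concretely,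
there is an injective monoid homomorphism into the partition monoid of `[±n]` whose
range is exactly the set of signed partitions and which maps `e_{i,j}` to `ε_{i,j}`. -/
theorem presentedMonoid_isomorphic_SPn (n : ℕ) (hn : 2 ≤ n) :
    ∃ φ : PresentedMonoid (SRel n) →* Setoid (PM n),
      Function.Injective φ ∧
      Set.range φ = {I | IsSigned I} ∧
      ∀ a : SGen n, φ (PresentedMonoid.of (SRel n) a) = eps a.1.1 a.1.2 :=
  presentedMonoid_isomorphic_SPn_general n
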